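/- For every dimension N ≥ 1, every degree k ∈ ℕ, every exponent p ∈ [1, +∞], and every δ > 0, there exists a constant C > 0 depending only on N, k, p and δ such that: for every bounded measurable set U ⊆ ℝ^N of positive Lebesgue measure and diameter h_U > 0 satisfying the δ-ball condition, and every polynomial v : ℝ^N → ℝ of total degree at most k, the inverse (discrete) inequality ‖∇v‖_{L^p(U; ℝ^N)} ≤ C · h_U^{-1} · ‖v‖_{L^p(U)} holds. -/

import Mathlib

open MeasureTheory Metric
open scoped ENNReal

noncomputable section

namespace InvIneqAux
open MvPolynomial

abbrev EN (N : ℕ) := EuclideanSpace ℝ (Fin N)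

def pe {N : ℕ} (P : MvPolynomial (Fin N) ℝ) : EN N → ℝ := fun x => eval (fun i => x i) P

variable {N : ℕ}

lemma pe_analytic (P : MvPolynomial (Fin N) ℝ) : AnalyticOnNhd ℝ (pe P) Set.univ := by
  have h : ∀ i, AnalyticOnNhd ℝ (fun x : EN N => x i) Set.univ := fun i x _ =>
    (EuclideanSpace.proj (𝕜 := ℝ) i).analyticAt x
  have := AnalyticOnNhd.aeval_mvPolynomial (𝕜 := ℝ) (f := fun (x : EN N) (i : Fin N) => x i)
    (s := Set.univ) h P
  exact this

lemma pe_contDiff (P : MvPolynomial (Fin N) ℝ) : ContDiff ℝ (⊤ : ℕ∞) (pe P) := by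
  rw [contDiff_iff_contDiffAt]
  exact fun x => ((pe_analytic P) x (Set.mem_univ x)).contDiffAt

lemma pe_cont (P : MvPolynomial (Fin N) ℝ) : Continuous (pe P) := (pe_contDiff P).continuous

lemma pe_diff (P : MvPolynomial (Fin N) ℝ) : Differentiable ℝ (pe P) :=
  (pe_contDiff P).differentiable (by simp)

lemma grad_pe_cont (P : MvPolynomial (Fin N) ℝ) :
    Continuous (fun x => gradient (pe P) x) := by
  have : (fun x => gradient (pe P) x) =
      fun x => (InnerProductSpace.toDual ℝ (EN N)).symm (fderiv ℝ (pe P) x) := rfl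
  rw [this]
  exact (InnerProductSpace.toDual ℝ (EN N)).symm.continuous.comp
    ((pe_contDiff P).continuous_fderiv (by simp))

lemma pe_add (P Q : MvPolynomial (Fin N) ℝ) : pe (P + Q) = fun x => pe P x + pe Q x := by
  funext x; simp [pe]

lemma pe_smul (c : ℝ) (P : MvPolynomial (Fin N) ℝ) : pe (c • P) = fun x => c • pe P x := by
  funext x; simp [pe]

lemma gradient_pe_add (P Q : MvPolynomial (Fin N) ℝ) (x : EN N) :
    gradient (pe (P + Q)) x = gradient (pe P) x + gradient (pe Q) x := by
  show (InnerProductSpace.toDual ℝ (EN N)).symm _ = _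
  rw [pe_add, fderiv_fun_add ((pe_diff P) x) ((pe_diff Q) x), map_add]
  rfl

lemma gradient_pe_smul (c : ℝ) (P : MvPolynomial (Fin N) ℝ) (x : EN N) :
    gradient (pe (c • P)) x = c • gradient (pe P) x := by
  show (InnerProductSpace.toDual ℝ (EN N)).symm _ = _
  rw [pe_smul, fderiv_fun_const_smul ((pe_diff P) x), LinearIsometryEquiv.map_smul]
  rfl


lemma totalDegree_aeval_le (f : Fin N → MvPolynomial (Fin N) ℝ)
    (hf : ∀ i, (f i).totalDegree ≤ 1) (P : MvPolynomial (Fin N) ℝ) :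
    (aeval f P).totalDegree ≤ P.totalDegree := by
  conv_lhs => rw [P.as_sum, map_sum]
  refine (totalDegree_finset_sum _ _).trans ?_
  refine Finset.sup_le fun m hm => ?_
  have h1 : aeval f (monomial m (coeff m P)) =
      C (coeff m P) * ∏ i ∈ m.support, (f i) ^ m i := by
    rw [monomial_eq, map_mul, Finsupp.prod, map_prod]
    simp only [map_pow, aeval_X, aeval_C, algebraMap_eq]
  rw [h1]
  refine (totalDegree_mul _ _).trans ?_
  rw [totalDegree_C, zero_add]
  refine le_trans (totalDegree_finset_prod _ _) ?_
  refine le_trans (Finset.sum_le_sum fun i _ => (totalDegree_pow _ _).trans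
    (by nlinarith [hf i] : m i * (f i).totalDegree ≤ m i)) ?_
  exact le_totalDegree hm

lemma eval_aeval' (g : Fin N → ℝ) (f : Fin N → MvPolynomial (Fin N) ℝ)
    (P : MvPolynomial (Fin N) ℝ) :
    eval g (aeval f P) = eval (fun i => eval g (f i)) P := by
  induction P using MvPolynomial.induction_on with
  | C a => simp
  | add p q hp hq => rw [map_add, map_add, map_add, hp, hq]
  | mul_X p i hp => rw [map_mul, aeval_X, map_mul, hp, map_mul, eval_X]


lemma gradient_comp_affine (P : MvPolynomial (Fin N) ℝ) (x₀ : EN N) (h : ℝ) (y : EN N) :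
    gradient (fun z => pe P (x₀ + h • z)) y = h • gradient (pe P) (x₀ + h • y) := by
  set g := gradient (pe P) (x₀ + h • y) with hg
  have h1 : HasGradientAt (pe P) g (x₀ + h • y) := (pe_diff P _).hasGradientAt
  have h2 : HasFDerivAt (pe P) (InnerProductSpace.toDual ℝ (EN N) g) (x₀ + h • y) :=
    hasGradientAt_iff_hasFDerivAt.1 h1
  have hT : HasFDerivAt (fun z : EN N => x₀ + h • z)
      (h • ContinuousLinearMap.id ℝ (EN N)) y := by
    simpa using ((hasFDerivAt_id y).const_smul h).const_add x₀
  have h3 := h2.comp y hT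
  have h4 : (InnerProductSpace.toDual ℝ (EN N) g).comp
      (h • ContinuousLinearMap.id ℝ (EN N)) = InnerProductSpace.toDual ℝ (EN N) (h • g) := by
    ext z
    simp [InnerProductSpace.toDual_apply_apply, real_inner_smul_left, real_inner_smul_right]
  rw [h4] at h3
  exact (hasGradientAt_iff_hasFDerivAt.2 h3).gradient

def Qaff (x₀ : EN N) (h : ℝ) (P : MvPolynomial (Fin N) ℝ) : MvPolynomial (Fin N) ℝ :=
  aeval (fun i => C (x₀ i) + C h * X i) P

lemma pe_Qaff (x₀ : EN N) (h : ℝ) (P : MvPolynomial (Fin N) ℝ) (y : EN N) :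
    pe (Qaff x₀ h P) y = pe P (x₀ + h • y) := by
  have := eval_aeval' (fun i => y i) (fun i => C (x₀ i) + C h * X i) P
  simp only [pe, Qaff, this, eval_add, eval_mul, eval_C, eval_X]
  congr 1

lemma totalDegree_Qaff_le (x₀ : EN N) (h : ℝ) (P : MvPolynomial (Fin N) ℝ) :
    (Qaff x₀ h P).totalDegree ≤ P.totalDegree := by
  refine totalDegree_aeval_le _ (fun i => ?_) P
  refine (totalDegree_add _ _).trans ?_
  simp only [totalDegree_C, max_le_iff]
  exact ⟨Nat.zero_le _, (totalDegree_mul _ _).trans (by simp [totalDegree_X])⟩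


lemma core (N k : ℕ) (p : ℝ≥0∞) (hp : 1 ≤ p) (δ : ℝ) (hδ : 0 < δ) :
    ∃ C : ℝ, 0 < C ∧ ∀ P : MvPolynomial (Fin N) ℝ, P.totalDegree ≤ k →
      eLpNorm (fun x => gradient (pe P) x) p (volume.restrict (closedBall (0 : EN N) 1))
        ≤ ENNReal.ofReal C * eLpNorm (pe P) p (volume.restrict (closedBall (0 : EN N) δ)) := by
  classical
  have hint : ∀ P : MvPolynomial (Fin N) ℝ,
      IntegrableOn (fun x => |pe P x|) (closedBall (0 : EN N) δ) volume := fun P =>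
    ((pe_cont P).abs.continuousOn).integrableOn_compact (isCompact_closedBall _ _)
  have hdef : ∀ P : MvPolynomial (Fin N) ℝ,
      (∫ x in closedBall (0 : EN N) δ, |pe P x|) = 0 → P = 0 := by
    intro P hP
    have h0 : (fun x => |pe P x|) =ᵐ[volume.restrict (closedBall (0 : EN N) δ)]
        (0 : EN N → ℝ) :=
      (integral_eq_zero_iff_of_nonneg (fun x => abs_nonneg _) (hint P)).1 hP
    have h0' : (fun x => |pe P x|) =ᵐ[volume.restrict (ball (0 : EN N) δ)] (0 : EN N → ℝ) :=
      ae_restrict_of_ae_restrict_of_subset ball_subset_closedBall h0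
    have heq : Set.EqOn (fun x => |pe P x|) (0 : EN N → ℝ) (ball (0 : EN N) δ) :=
      Measure.eqOn_open_of_ae_eq h0' isOpen_ball (pe_cont P).abs.continuousOn
        continuousOn_const
    have hz : Set.EqOn (pe P) 0 Set.univ := by
      refine (pe_analytic P).eqOn_zero_of_preconnected_of_eventuallyEq_zero
        isPreconnected_univ (Set.mem_univ (0 : EN N)) ?_
      refine Filter.eventuallyEq_of_mem (ball_mem_nhds (0 : EN N) hδ) fun x hx => ?_
      have := heq hx
      simpa using abs_eq_zero.1 this
    refine MvPolynomial.funext fun g => ?_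
    have := hz (Set.mem_univ ((WithLp.equiv 2 (Fin N → ℝ)).symm g))
    simpa [pe, WithLp.equiv_symm_apply, PiLp.toLp_apply] using this
  letI : NormedAddCommGroup (restrictTotalDegree (Fin N) ℝ k) :=
    AddGroupNorm.toNormedAddCommGroup
    { toFun := fun Q => ∫ x in closedBall (0 : EN N) δ, |pe (Q : MvPolynomial (Fin N) ℝ) x|
      map_zero' := by simp [pe]
      add_le' := fun Q R => by
        have h1 : ∀ x : EN N, |pe ((Q : MvPolynomial (Fin N) ℝ) + (R : MvPolynomial (Fin N) ℝ)) x|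
            ≤ |pe (Q : MvPolynomial (Fin N) ℝ) x| + |pe (R : MvPolynomial (Fin N) ℝ) x| := by
          intro x
          simp only [pe, map_add]
          exact abs_add_le _ _
        calc ∫ x in closedBall (0 : EN N) δ, |pe ((Q + R : restrictTotalDegree (Fin N) ℝ k) : MvPolynomial (Fin N) ℝ) x|
            ≤ ∫ x in closedBall (0 : EN N) δ,
              (|pe (Q : MvPolynomial (Fin N) ℝ) x| + |pe (R : MvPolynomial (Fin N) ℝ) x|) := by
              rw [Submodule.coe_add]
              exact integral_mono (hint _) ((hint _).add (hint _)) h1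
          _ = _ := integral_add (hint _) (hint _)
      neg' := fun Q => by
        simp only [Submodule.coe_neg]
        congr 1
        funext x
        simp [pe]
      eq_zero_of_map_eq_zero' := fun Q hQ => Subtype.ext (hdef _ hQ) }
  letI : NormedSpace ℝ (restrictTotalDegree (Fin N) ℝ k) :=
    { norm_smul_le := fun c Q => by
        have h1 : ∀ x : EN N, |pe (c • (Q : MvPolynomial (Fin N) ℝ)) x| = |c| * |pe (Q : MvPolynomial (Fin N) ℝ) x| := by
          intro x
          simp [pe, abs_mul, smul_eval]
        show (∫ x in closedBall (0 : EN N) δ, |pe ((c • Q : restrictTotalDegree (Fin N) ℝ k) : MvPolynomial (Fin N) ℝ) x|)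
          ≤ ‖c‖ * ∫ x in closedBall (0 : EN N) δ, |pe (Q : MvPolynomial (Fin N) ℝ) x|
        rw [show ((c • Q : restrictTotalDegree (Fin N) ℝ k) : MvPolynomial (Fin N) ℝ) = c • (Q : MvPolynomial (Fin N) ℝ) from rfl]
        simp_rw [h1]
        rw [integral_const_mul]
        exact le_of_eq (by rw [Real.norm_eq_abs]) }
  letI : CompactSpace (closedBall (0 : EN N) 1) :=
    isCompact_iff_compactSpace.1 (isCompact_closedBall _ _)
  let Φ : restrictTotalDegree (Fin N) ℝ k →ₗ[ℝ] C(closedBall (0 : EN N) 1, EN N) :=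
    { toFun := fun Q => ⟨fun x => gradient (pe (Q : MvPolynomial (Fin N) ℝ)) x.1,
        (grad_pe_cont _).comp continuous_subtype_val⟩
      map_add' := fun Q R => by
        refine ContinuousMap.ext fun x => ?_
        show gradient (pe ((Q : MvPolynomial (Fin N) ℝ) + (R : MvPolynomial (Fin N) ℝ))) x.1 = _
        rw [gradient_pe_add]
        rfl
      map_smul' := fun c Q => by
        refine ContinuousMap.ext fun x => ?_
        show gradient (pe (c • (Q : MvPolynomial (Fin N) ℝ))) x.1 = _
        rw [gradient_pe_smul]
        rfl }
  letI : TopologicalSpace (restrictTotalDegree (Fin N) ℝ k) :=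
    PseudoMetricSpace.toUniformSpace.toTopologicalSpace
  let Φ' := LinearMap.toContinuousLinearMap Φ
  have hc₁0 : (0:ℝ) ≤ ‖Φ'‖ := Φ'.opNorm_nonneg
  have hv1top : volume (closedBall (0 : EN N) 1) ≠ ∞ := measure_closedBall_lt_top.ne
  have hv2top : volume (closedBall (0 : EN N) δ) ≠ ∞ := measure_closedBall_lt_top.ne
  have hexp2 : 0 ≤ 1 - 1 / p.toReal := by
    rcases eq_or_ne p ∞ with h | h
    · simp [h]
    · have h1p : (1:ℝ) ≤ p.toReal := by
        simpa using (ENNReal.toReal_le_toReal ENNReal.one_ne_top h).2 hp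
      have : 1 / p.toReal ≤ 1 := by
        rw [div_le_one (by linarith)]; linarith
      linarith
  set K := volume (closedBall (0 : EN N) 1) ^ p.toReal⁻¹ * ENNReal.ofReal ‖Φ'‖
      * volume (closedBall (0 : EN N) δ) ^ (1 - 1 / p.toReal) with hK
  have hKtop : K ≠ ∞ :=
    ENNReal.mul_ne_top (ENNReal.mul_ne_top (ENNReal.rpow_ne_top_of_nonneg (by positivity) hv1top)
      ENNReal.ofReal_ne_top) (ENNReal.rpow_ne_top_of_nonneg hexp2 hv2top)
  refine ⟨K.toReal + 1, by positivity, ?_⟩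
  intro P hP
  set Q : restrictTotalDegree (Fin N) ℝ k := ⟨P, (mem_restrictTotalDegree _ k P).2 hP⟩ with hQdef
  have hbd : ∀ x ∈ closedBall (0 : EN N) 1, ‖gradient (pe P) x‖ ≤ ‖Φ'‖ * ‖Q‖ := by
    intro x hx
    have h1 : ‖(Φ Q) ⟨x, hx⟩‖ ≤ ‖Φ Q‖ := ContinuousMap.norm_coe_le_norm (Φ Q) ⟨x, hx⟩
    exact h1.trans (Φ'.le_opNorm Q)
  have h1 : eLpNorm (fun x => gradient (pe P) x) p (volume.restrict (closedBall (0 : EN N) 1))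
      ≤ volume (closedBall (0 : EN N) 1) ^ p.toReal⁻¹ * ENNReal.ofReal (‖Φ'‖ * ‖Q‖) := by
    refine le_trans (eLpNorm_le_of_ae_bound ((ae_restrict_iff' measurableSet_closedBall).2
      (ae_of_all _ hbd))) (le_of_eq ?_)
    rw [Measure.restrict_apply_univ]
  have h2 : ENNReal.ofReal ‖Q‖ = eLpNorm (pe P) 1 (volume.restrict (closedBall (0 : EN N) δ)) := by
    rw [eLpNorm_one_eq_lintegral_enorm]
    rw [show (‖Q‖ : ℝ) = ∫ x in closedBall (0 : EN N) δ, |pe P x| from rfl]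
    rw [ofReal_integral_eq_lintegral_ofReal (hint P) (ae_of_all _ fun x => abs_nonneg _)]
    exact lintegral_congr fun x => by rw [← Real.norm_eq_abs, ofReal_norm]
  have h3 : eLpNorm (pe P) 1 (volume.restrict (closedBall (0 : EN N) δ))
      ≤ eLpNorm (pe P) p (volume.restrict (closedBall (0 : EN N) δ))
        * volume (closedBall (0 : EN N) δ) ^ (1 - 1 / p.toReal) := by
    have := eLpNorm_le_eLpNorm_mul_rpow_measure_univ (p := 1) (q := p)
      (μ := volume.restrict (closedBall (0 : EN N) δ)) hp ((pe_cont P).aestronglyMeasurable)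
    simpa [Measure.restrict_apply_univ] using this
  calc eLpNorm (fun x => gradient (pe P) x) p (volume.restrict (closedBall (0 : EN N) 1))
      ≤ volume (closedBall (0 : EN N) 1) ^ p.toReal⁻¹ * ENNReal.ofReal (‖Φ'‖ * ‖Q‖) := h1
    _ = volume (closedBall (0 : EN N) 1) ^ p.toReal⁻¹
        * (ENNReal.ofReal ‖Φ'‖ * ENNReal.ofReal ‖Q‖) := by rw [ENNReal.ofReal_mul hc₁0]
    _ ≤ volume (closedBall (0 : EN N) 1) ^ p.toReal⁻¹ * (ENNReal.ofReal ‖Φ'‖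
        * (eLpNorm (pe P) p (volume.restrict (closedBall (0 : EN N) δ))
          * volume (closedBall (0 : EN N) δ) ^ (1 - 1 / p.toReal))) := by
        gcongr
        rw [h2]; exact h3
    _ = K * eLpNorm (pe P) p (volume.restrict (closedBall (0 : EN N) δ)) := by
        rw [hK]; ring
    _ ≤ ENNReal.ofReal (K.toReal + 1)
        * eLpNorm (pe P) p (volume.restrict (closedBall (0 : EN N) δ)) := by
        gcongr
        calc K = ENNReal.ofReal K.toReal := (ENNReal.ofReal_toReal hKtop).symm
          _ ≤ _ := ENNReal.ofReal_le_ofReal (by linarith)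


lemma map_affine_volume (x₀ : EN N) {h : ℝ} (hh : 0 < h) :
    Measure.map (fun y : EN N => x₀ + h • y) volume
      = ENNReal.ofReal ((h ^ N)⁻¹) • volume := by
  have hm1 : Measurable fun y : EN N => h • y := (continuous_id.const_smul h).measurable
  have hm2 : Measurable fun z : EN N => x₀ + z := (continuous_const.add continuous_id).measurable
  have key : Measure.map (fun y : EN N => h • y) volume
      = ENNReal.ofReal |(h ^ Module.finrank ℝ (EN N))⁻¹| • volume :=
    Measure.map_addHaar_smul volume hh.ne'
  calc Measure.map (fun y : EN N => x₀ + h • y) volume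
      = Measure.map ((fun z : EN N => x₀ + z) ∘ fun y : EN N => h • y) volume := rfl
    _ = Measure.map (fun z : EN N => x₀ + z) (Measure.map (fun y : EN N => h • y) volume) :=
        (Measure.map_map hm2 hm1).symm
    _ = Measure.map (fun z : EN N => x₀ + z)
        (ENNReal.ofReal |(h ^ Module.finrank ℝ (EN N))⁻¹| • volume) := by rw [key]
    _ = ENNReal.ofReal |(h ^ Module.finrank ℝ (EN N))⁻¹|
        • Measure.map (fun z : EN N => x₀ + z) volume := Measure.map_smul _ _ _
    _ = ENNReal.ofReal ((h ^ N)⁻¹) • volume := by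
        rw [MeasureTheory.map_add_left_eq_self volume x₀]
        congr 2
        rw [finrank_euclideanSpace_fin, abs_of_pos (by positivity)]

lemma eLpNorm_comp_affine {F : Type*} [NormedAddCommGroup F] (f : EN N → F)
    (hf : Continuous f) (x₀ : EN N) {h : ℝ} (hh : 0 < h) {S : Set (EN N)}
    (hS : MeasurableSet S) (p : ℝ≥0∞) :
    eLpNorm (fun y => f (x₀ + h • y)) p
        (volume.restrict ((fun y : EN N => x₀ + h • y) ⁻¹' S))
      = (ENNReal.ofReal ((h ^ N)⁻¹)) ^ (1 / p).toReal * eLpNorm f p (volume.restrict S) := by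
  have hT : Measurable fun y : EN N => x₀ + h • y :=
    (continuous_const.add (continuous_id.const_smul h)).measurable
  have e1 : eLpNorm (fun y => f (x₀ + h • y)) p
      (volume.restrict ((fun y : EN N => x₀ + h • y) ⁻¹' S))
      = eLpNorm f p (Measure.map (fun y : EN N => x₀ + h • y)
          (volume.restrict ((fun y : EN N => x₀ + h • y) ⁻¹' S))) :=
    (eLpNorm_map_measure hf.aestronglyMeasurable hT.aemeasurable).symm
  rw [e1, ← Measure.restrict_map hT hS, map_affine_volume x₀ hh,
    Measure.restrict_smul, eLpNorm_smul_measure_of_ne_zero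
      (by simp [ENNReal.ofReal_eq_zero]; positivity), smul_eq_mul]


lemma preimage_affine_closedBall (x₀ : EN N) {h : ℝ} (hh : 0 < h) (c : ℝ) :
    (fun y : EN N => x₀ + h • y) ⁻¹' closedBall x₀ (c * h) = closedBall 0 c := by
  ext y
  have hd : dist (x₀ + h • y) x₀ = h * ‖y‖ := by
    rw [dist_eq_norm, add_sub_cancel_left, norm_smul, Real.norm_eq_abs, abs_of_pos hh]
  simp only [Set.mem_preimage, mem_closedBall, hd, dist_zero_right]
  rw [mul_comm c h]
  exact mul_le_mul_iff_right₀ hh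


end InvIneqAux

/-- `v : ℝ^N → ℝ` is (given by) a multivariate polynomial of total degree at most `k`. -/
def IsPolyDegLE (N k : ℕ) (v : EuclideanSpace ℝ (Fin N) → ℝ) : Prop :=
  ∃ P : MvPolynomial (Fin N) ℝ, P.totalDegree ≤ k ∧ ∀ x, v x = MvPolynomial.eval (fun i => x i) P

/-- Inverse (discrete) inequality on local polynomial spaces:
`‖∇v‖_{L^p(U)} ≤ C h_U⁻¹ ‖v‖_{L^p(U)}`. -/
theorem inverse_inequality_gradient
    (N k : ℕ) (hN : 1 ≤ N) (p : ℝ≥0∞) (hp : 1 ≤ p) (δ : ℝ) (hδ : 0 < δ) :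
    ∃ C : ℝ, 0 < C ∧
      ∀ U : Set (EuclideanSpace ℝ (Fin N)),
        Bornology.IsBounded U → MeasurableSet U → 0 < volume U → 0 < Metric.diam U →
        (∃ x, Metric.closedBall x (δ * Metric.diam U) ⊆ U) →
        ∀ v : EuclideanSpace ℝ (Fin N) → ℝ, IsPolyDegLE N k v →
          eLpNorm (fun x => gradient v x) p (volume.restrict U)
            ≤ ENNReal.ofReal (C * (Metric.diam U)⁻¹) * eLpNorm v p (volume.restrict U) := by
  classical
  obtain ⟨C₀, hC₀, hcore⟩ := InvIneqAux.core N k p hp δ hδ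
  refine ⟨C₀, hC₀, ?_⟩
  intro U hUb hUm hUvol hUdiam hball v hv
  obtain ⟨x₀, hx₀⟩ := hball
  obtain ⟨P, hdeg, hvP⟩ := hv
  have hveq : v = InvIneqAux.pe P := funext hvP
  subst hveq
  set h : ℝ := Metric.diam U with hhdef
  have hhpos : 0 < h := hUdiam
  have hx₀U : x₀ ∈ U := hx₀ (mem_closedBall_self (by positivity))
  have hUsub : U ⊆ closedBall x₀ h := fun u hu =>
    mem_closedBall.2 (dist_le_diam_of_mem hUb hu hx₀U)
  set Q := InvIneqAux.Qaff x₀ h P with hQ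
  have hdegQ : Q.totalDegree ≤ k := (InvIneqAux.totalDegree_Qaff_le x₀ h P).trans hdeg
  have hQfun : InvIneqAux.pe Q = fun y => InvIneqAux.pe P (x₀ + h • y) :=
    funext (InvIneqAux.pe_Qaff x₀ h P)
  have hgrad : (fun y : InvIneqAux.EN N => gradient (InvIneqAux.pe P) (x₀ + h • y))
      = fun y => h⁻¹ • gradient (InvIneqAux.pe Q) y := by
    funext y
    rw [hQfun, InvIneqAux.gradient_comp_affine P x₀ h y, inv_smul_smul₀ hhpos.ne']
  set σs := (ENNReal.ofReal ((h ^ N)⁻¹)) ^ (1 / p).toReal with hσs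
  have hσs0 : σs ≠ 0 :=
    (ENNReal.rpow_pos (ENNReal.ofReal_pos.2 (by positivity)) ENNReal.ofReal_ne_top).ne'
  have hσstop : σs ≠ ∞ :=
    ENNReal.rpow_ne_top_of_nonneg ENNReal.toReal_nonneg ENNReal.ofReal_ne_top
  have hpre1 : ((fun y : InvIneqAux.EN N => x₀ + h • y) ⁻¹' closedBall x₀ h)
      = closedBall 0 1 := by
    simpa using InvIneqAux.preimage_affine_closedBall x₀ hhpos 1
  have hpre2 : ((fun y : InvIneqAux.EN N => x₀ + h • y) ⁻¹' closedBall x₀ (δ * h))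
      = closedBall 0 δ := InvIneqAux.preimage_affine_closedBall x₀ hhpos δ
  -- gradient side
  have e1 := InvIneqAux.eLpNorm_comp_affine (fun x => gradient (InvIneqAux.pe P) x)
    (InvIneqAux.grad_pe_cont P) x₀ hhpos (measurableSet_closedBall (x := x₀) (ε := h)) p
  rw [hpre1] at e1
  have e1' : eLpNorm (fun y : InvIneqAux.EN N => h⁻¹ • gradient (InvIneqAux.pe Q) y) p
        (volume.restrict (closedBall 0 1))
      = σs * eLpNorm (fun x => gradient (InvIneqAux.pe P) x) p
          (volume.restrict (closedBall x₀ h)) := by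
    rw [← hgrad]; exact e1
  have e2 : eLpNorm (fun y : InvIneqAux.EN N => h⁻¹ • gradient (InvIneqAux.pe Q) y) p
        (volume.restrict (closedBall 0 1))
      = (‖h⁻¹‖₊ : ℝ≥0∞) * eLpNorm (fun y => gradient (InvIneqAux.pe Q) y) p
          (volume.restrict (closedBall 0 1)) := by
    rw [show (fun y : InvIneqAux.EN N => h⁻¹ • gradient (InvIneqAux.pe Q) y)
        = h⁻¹ • (fun y => gradient (InvIneqAux.pe Q) y) from rfl,
      eLpNorm_const_smul, enorm_eq_nnnorm]
  -- function side
  have e3 := InvIneqAux.eLpNorm_comp_affine (InvIneqAux.pe P) (InvIneqAux.pe_cont P) x₀ hhpos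
    (measurableSet_closedBall (x := x₀) (ε := δ * h)) p
  rw [hpre2] at e3
  have e3' : eLpNorm (InvIneqAux.pe Q) p (volume.restrict (closedBall 0 δ))
      = σs * eLpNorm (InvIneqAux.pe P) p (volume.restrict (closedBall x₀ (δ * h))) := by
    rw [hQfun]; exact e3
  have e4 : eLpNorm (InvIneqAux.pe Q) p (volume.restrict (closedBall 0 δ))
      ≤ σs * eLpNorm (InvIneqAux.pe P) p (volume.restrict U) := by
    rw [e3']
    gcongr
  have hm1 : eLpNorm (fun x => gradient (InvIneqAux.pe P) x) p (volume.restrict U)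
      ≤ eLpNorm (fun x => gradient (InvIneqAux.pe P) x) p (volume.restrict (closedBall x₀ h)) :=
    eLpNorm_mono_measure _ (Measure.restrict_mono hUsub le_rfl)
  have key : σs * eLpNorm (fun x => gradient (InvIneqAux.pe P) x) p
        (volume.restrict (closedBall x₀ h))
      ≤ σs * (ENNReal.ofReal (C₀ * h⁻¹) * eLpNorm (InvIneqAux.pe P) p (volume.restrict U)) := by
    rw [← e1', e2]
    calc (‖h⁻¹‖₊ : ℝ≥0∞) * eLpNorm (fun y => gradient (InvIneqAux.pe Q) y) p
          (volume.restrict (closedBall 0 1))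
        ≤ (‖h⁻¹‖₊ : ℝ≥0∞) * (ENNReal.ofReal C₀
            * eLpNorm (InvIneqAux.pe Q) p (volume.restrict (closedBall 0 δ))) := by
          gcongr
          exact hcore Q hdegQ
      _ ≤ (‖h⁻¹‖₊ : ℝ≥0∞) * (ENNReal.ofReal C₀
            * (σs * eLpNorm (InvIneqAux.pe P) p (volume.restrict U))) := by
          gcongr
      _ = σs * ((‖h⁻¹‖₊ : ℝ≥0∞) * ENNReal.ofReal C₀
            * eLpNorm (InvIneqAux.pe P) p (volume.restrict U)) := by ring
      _ = σs * (ENNReal.ofReal (C₀ * h⁻¹) * eLpNorm (InvIneqAux.pe P) p (volume.restrict U)) := by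
          congr 2
          rw [← enorm_eq_nnnorm, Real.enorm_eq_ofReal (by positivity), ← ENNReal.ofReal_mul (by positivity),
            mul_comm]
  have final := (ENNReal.mul_le_mul_iff_right hσs0 hσstop).1 key
  exact hm1.trans final
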